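/- arXiv:2005.04227 — 6 statements merged into one kernel-verified Lean document; each statement's English description precedes it below -/
import Mathlib

section
/- For every non-negative integer n and every nonzero complex number a, the finite sum ∑_{j=0}^{2n} (-a/2)^(-j) · E(j+1, (a+1)/2) / (j! · (2n-j)!) equals E(2n) / (2 · (2n)! · a^(2n-1)), where E(m,x) denotes the m-th Euler polynomial and E(m) the m-th Euler number. -/
/-! The Euler polynomials form an Appell sequence, `E_m' = m E_{m-1}`, so Taylor expansion gives
`E_{j+1}(1/2 + t) = ∑_k C(j+1,k) E_k(1/2) t^{j+1-k}`. Substituting this and exchanging the sums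
leaves the alternating binomial sums `∑_j (-1)^j C(N,j) C(j+1,k)`, the coefficients of
`(1+X)(1-(1+X))^N = (-1)^N (X^N + X^{N+1})`. So only `k = N` and `k = N+1` survive, and the
latter vanishes because `E_m(1-x) = (-1)^m E_m(x)` forces `E_m(1/2) = 0` for odd `m`. -/

/-- The `n`-th Euler polynomial (as a function `ℂ → ℂ`), defined via Bernoulli
polynomials by `E_n(x) = 2^{n+1}/(n+1) * (B_{n+1}((x+1)/2) - B_{n+1}(x/2))`,
which is equivalent to the generating function `2 e^{xt}/(e^t+1) = ∑ E_n(x) t^n/n!`. -/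
noncomputable def eulerPoly (n : ℕ) (x : ℂ) : ℂ :=
  (2 : ℂ) ^ (n + 1) / (n + 1) *
    (Polynomial.aeval ((x + 1) / 2) (Polynomial.bernoulli (n + 1)) -
     Polynomial.aeval (x / 2) (Polynomial.bernoulli (n + 1)))

/-- The `n`-th Euler number, `E_n = 2^n E_n(1/2)`. -/
noncomputable def eulerNumber (n : ℕ) : ℂ := 2 ^ n * eulerPoly n (1 / 2)

open Polynomial Finset
open scoped Nat

namespace Polynomial

def IsAppell {R : Type*} [CommSemiring R] (p : ℕ → R[X]) : Prop :=
  ∀ n, derivative (p n) = n * p (n - 1)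

namespace IsAppell

variable {R : Type*} [CommSemiring R] {p : ℕ → R[X]}

theorem iterate_derivative (hp : IsAppell p) (n k : ℕ) :
    derivative^[k] (p n) = n.descFactorial k * p (n - k) := by
  induction k with
  | zero => simp
  | succ k ih =>
    rw [Function.iterate_succ_apply', ih, derivative_natCast_mul, hp, Nat.descFactorial_succ,
      Nat.sub_sub]
    push_cast
    ring

theorem hasseDeriv_eq [IsDomain R] [CharZero R] (hp : IsAppell p) (n k : ℕ) :
    hasseDeriv k (p n) = n.choose k * p (n - k) := by
  apply smul_right_injective R[X] (Nat.factorial_ne_zero k)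
  have h := congrFun (factorial_smul_hasseDeriv (R := R) (k := k)) (p n)
  rw [LinearMap.smul_apply] at h
  dsimp only
  rw [h, hp.iterate_derivative, Nat.descFactorial_eq_factorial_mul_choose, nsmul_eq_mul]
  push_cast
  ring

theorem eval_add [IsDomain R] [CharZero R] (hp : IsAppell p) (n : ℕ) (x y : R) :
    (p n).eval (x + y) = ∑ k ∈ range (n + 1), n.choose k * (p k).eval x * y ^ (n - k) := by
  have hcoeff (k : ℕ) : (taylor x (p n)).coeff k = n.choose k * (p (n - k)).eval x := by
    rw [taylor_coeff, hp.hasseDeriv_eq, eval_natCast_mul]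
  have hdeg : (taylor x (p n)).natDegree < n + 1 :=
    Nat.lt_succ_of_le <| natDegree_le_iff_coeff_eq_zero.mpr fun N hN => by
      rw [hcoeff, Nat.choose_eq_zero_of_lt hN, Nat.cast_zero, zero_mul]
  rw [add_comm, ← taylor_eval, eval_eq_sum_range' hdeg, ← sum_range_reflect]
  refine sum_congr rfl fun k hk => ?_
  have hkn : k ≤ n := Nat.lt_succ_iff.mp (mem_range.mp hk)
  rw [hcoeff, Nat.add_sub_cancel, Nat.choose_symm hkn, Nat.sub_sub_self hkn]

theorem map {S : Type*} [CommSemiring S] (hp : IsAppell p) (f : R →+* S) :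
    IsAppell fun n => (p n).map f := fun n => by
  rw [derivative_map, hp, Polynomial.map_mul, Polynomial.map_natCast]

end IsAppell

end Polynomial

noncomputable def eulerPolynomial (n : ℕ) : ℚ[X] :=
  C ((2 : ℚ) ^ (n + 1) / (n + 1)) *
    ((Polynomial.bernoulli (n + 1)).comp (C 2⁻¹ * (X + 1)) -
      (Polynomial.bernoulli (n + 1)).comp (C 2⁻¹ * X))

theorem aeval_eulerPolynomial (n : ℕ) (x : ℂ) : aeval x (eulerPolynomial n) = eulerPoly n x := by
  simp [eulerPolynomial, eulerPoly, aeval_comp, div_eq_inv_mul]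

theorem isAppell_eulerPolynomial : IsAppell eulerPolynomial := by
  have hderiv (n : ℕ) : derivative (eulerPolynomial n) = C ((2 : ℚ) ^ n) *
      ((Polynomial.bernoulli n).comp (C 2⁻¹ * (X + 1)) -
        (Polynomial.bernoulli n).comp (C 2⁻¹ * X)) := by
    have hconst : (2 : ℚ) ^ (n + 1) / (n + 1) * 2⁻¹ * (n + 1) = 2 ^ n := by
      field_simp
      ring
    simp only [eulerPolynomial, derivative_mul, derivative_C, derivative_sub, derivative_comp,
      derivative_bernoulli_add_one, derivative_add, derivative_X, derivative_one, mul_comp,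
      add_comp, natCast_comp, one_comp]
    rw [← hconst, C_mul, C_mul, C_add, C_1, C_eq_natCast]
    ring
  intro n
  cases n with
  | zero => simp [hderiv, Polynomial.bernoulli_zero]
  | succ n =>
    rw [hderiv, eulerPolynomial, Nat.add_sub_cancel, ← mul_assoc, ← C_eq_natCast, ← C_mul]
    congr 2
    field_simp
    push_cast
    ring

theorem eulerPoly_add (m : ℕ) (x y : ℂ) :
    eulerPoly m (x + y) = ∑ k ∈ range (m + 1), m.choose k * eulerPoly k x * y ^ (m - k) := by
  simpa only [eval_map_algebraMap, aeval_eulerPolynomial] using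
    (isAppell_eulerPolynomial.map (algebraMap ℚ ℂ)).eval_add m x y

theorem aeval_bernoulli_one_sub {A : Type*} [CommRing A] [Algebra ℚ A] (n : ℕ) (x : A) :
    aeval (1 - x) (Polynomial.bernoulli n) = (-1) ^ n * aeval x (Polynomial.bernoulli n) := by
  simpa [aeval_comp] using congrArg (aeval x) (bernoulli_comp_one_sub_X n)

theorem eulerPoly_one_sub (m : ℕ) (x : ℂ) : eulerPoly m (1 - x) = (-1) ^ m * eulerPoly m x := by
  rw [eulerPoly, eulerPoly, show (1 - x + 1) / 2 = 1 - x / 2 by ring,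
    show (1 - x) / 2 = 1 - (x + 1) / 2 by ring, aeval_bernoulli_one_sub, aeval_bernoulli_one_sub]
  ring

theorem eulerPoly_half_of_odd {m : ℕ} (hm : Odd m) : eulerPoly m (1 / 2) = 0 := by
  have h := eulerPoly_one_sub m (1 / 2)
  rw [show (1 : ℂ) - 1 / 2 = 1 / 2 by norm_num, hm.neg_one_pow, neg_one_mul] at h
  exact self_eq_neg.mp h

section AlternatingSum

variable {R : Type*} [CommRing R]

theorem sum_neg_one_pow_mul_choose_mul_X_add_one_pow (M : ℕ) :
    ∑ j ∈ range (M + 1), C ((-1 : R) ^ j * M.choose j) * (X + 1) ^ (j + 1) =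
      C ((-1) ^ M) * (X ^ M + X ^ (M + 1)) := by
  simp only [C_mul, C_pow, C_neg, C_1, map_natCast]
  calc ∑ j ∈ range (M + 1), (-1 : R[X]) ^ j * (M.choose j : R[X]) * (X + 1) ^ (j + 1)
      = (X + 1) * ∑ j ∈ range (M + 1), (-(X + 1)) ^ j * 1 ^ (M - j) * M.choose j := by
        rw [mul_sum]
        refine sum_congr rfl fun j _ => ?_
        rw [neg_pow (X + 1 : R[X]), one_pow]
        ring
    _ = (X + 1) * (-(X + 1) + 1) ^ M := by rw [add_pow]
    _ = (-1) ^ M * (X ^ M + X ^ (M + 1)) := by ring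

theorem sum_neg_one_pow_mul_choose_mul_choose_succ (M k : ℕ) :
    ∑ j ∈ range (M + 1), (-1 : R) ^ j * M.choose j * (j + 1).choose k =
      (-1) ^ M * ((if k = M then 1 else 0) + if k = M + 1 then 1 else 0) := by
  simpa only [finsetSum_coeff, coeff_C_mul, coeff_X_add_one_pow, coeff_add, coeff_X_pow] using
    congrArg (coeff · k) (sum_neg_one_pow_mul_choose_mul_X_add_one_pow (R := R) M)

theorem sum_neg_one_pow_mul_choose_mul_sum_choose_succ (c : ℕ → R) (M : ℕ) :
    ∑ j ∈ range (M + 1), (-1) ^ j * M.choose j * ∑ k ∈ range (j + 2), (j + 1).choose k * c k =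
      (-1) ^ M * (c M + c (M + 1)) := by
  have hextend : ∀ j ∈ range (M + 1), ∑ k ∈ range (j + 2), ((j + 1).choose k : R) * c k =
      ∑ k ∈ range (M + 2), (j + 1).choose k * c k := fun j hj =>
    sum_subset (range_subset_range.mpr (by simp at hj; omega)) fun k _ hk => by
      rw [Nat.choose_eq_zero_of_lt (by simp at hk; omega), Nat.cast_zero, zero_mul]
  calc _ = ∑ j ∈ range (M + 1), ∑ k ∈ range (M + 2),
        (-1) ^ j * M.choose j * (j + 1).choose k * c k :=
        sum_congr rfl fun j hj => by simp_rw [hextend j hj, mul_sum, mul_assoc]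
    _ = ∑ k ∈ range (M + 2),
          (-1) ^ M * ((if k = M then 1 else 0) + if k = M + 1 then 1 else 0) * c k := by
        rw [sum_comm]
        simp_rw [← sum_mul, sum_neg_one_pow_mul_choose_mul_choose_succ]
    _ = (-1) ^ M * (c M + c (M + 1)) := by
        simp [add_mul, mul_add, sum_add_distrib]

end AlternatingSum

theorem eulerPoly_add_eq_pow_mul_sum (m : ℕ) (x : ℂ) {t : ℂ} (ht : t ≠ 0) :
    eulerPoly m (x + t) = t ^ m * ∑ k ∈ range (m + 1), m.choose k * (eulerPoly k x / t ^ k) := by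
  rw [eulerPoly_add, mul_sum]
  refine sum_congr rfl fun k hk => ?_
  rw [pow_sub₀ t ht (Nat.lt_succ_iff.mp (mem_range.mp hk))]
  ring

theorem neg_zpow_mul_eulerPoly_div_factorial_mul_factorial {t : ℂ} (ht : t ≠ 0) {N j : ℕ}
    (hj : j ≤ N) :
    (-t) ^ (-(j : ℤ)) * eulerPoly (j + 1) (1 / 2 + t) / (j ! * (N - j)! : ℂ) =
      t / N ! * ((-1) ^ j * N.choose j *
        ∑ k ∈ range (j + 2), (j + 1).choose k * (eulerPoly k (1 / 2) / t ^ k)) := by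
  rw [eulerPoly_add_eq_pow_mul_sum _ _ ht, zpow_neg, zpow_natCast, neg_pow, mul_inv,
    ← inv_pow (-1 : ℂ), inv_neg_one, Nat.cast_choose ℂ hj]
  have hN : (N ! : ℂ) ≠ 0 := Nat.cast_ne_zero.mpr N.factorial_ne_zero
  field_simp
  ring

/-- Sum of Euler polynomials identity (Corollary, §3.1.1): for `n ≥ 0` and `a ≠ 0`,
`∑_{j=0}^{2n} (-a/2)^{-j} E(j+1,(a+1)/2) / (j! (2n-j)!) = E(2n) / (2 (2n)! a^{2n-1})`. -/
theorem euler_poly_sum (n : ℕ) (a : ℂ) (ha : a ≠ 0) :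
    ∑ j ∈ Finset.range (2 * n + 1),
      (-a / 2) ^ (-(j : ℤ)) * eulerPoly (j + 1) ((a + 1) / 2) /
        ((Nat.factorial j : ℂ) * (Nat.factorial (2 * n - j) : ℂ)) =
    eulerNumber (2 * n) / (2 * (Nat.factorial (2 * n) : ℂ) * a ^ (2 * (n : ℤ) - 1)) := by
  have ht : a / 2 ≠ 0 := div_ne_zero ha two_ne_zero
  have hsummand : ∀ j ∈ range (2 * n + 1),
      (-a / 2) ^ (-(j : ℤ)) * eulerPoly (j + 1) ((a + 1) / 2) / ((j ! : ℂ) * ((2 * n - j)! : ℂ)) =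
        a / 2 / (2 * n)! * ((-1) ^ j * (2 * n).choose j *
          ∑ k ∈ range (j + 2), (j + 1).choose k * (eulerPoly k (1 / 2) / (a / 2) ^ k)) :=
    fun j hj => by
      rw [neg_div, show (a + 1) / 2 = 1 / 2 + a / 2 by ring]
      exact neg_zpow_mul_eulerPoly_div_factorial_mul_factorial ht
        (Nat.lt_succ_iff.mp (mem_range.mp hj))
  rw [sum_congr rfl hsummand, ← mul_sum, sum_neg_one_pow_mul_choose_mul_sum_choose_succ,
    eulerPoly_half_of_odd (odd_two_mul_add_one n), zero_div, add_zero,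
    (even_two_mul n).neg_one_pow, one_mul, eulerNumber, zpow_sub_one₀ ha,
    show 2 * (n : ℤ) = (2 * n : ℕ) by push_cast; ring, zpow_natCast, div_pow]
  field_simp
end

section
/- For real s > 0 and real a > 0, the integral ∫_0^∞ v^(s-1) e^(-a v) / cosh(v) dv equals 2^(1-2s) Γ(s) (ζ(s, a/4 + 1/4) - ζ(s, a/4 + 3/4)). -/
/-!
For `t > 0` the geometric series gives `e^{-at} / cosh t = 2 ∑ₙ (-1)ⁿ e^{-(a+2n+1)t}`. For
`Re z > 1` the Mellin transform may be taken term by term, giving `2 Γ(z) ∑ₙ (-1)ⁿ (a+2n+1)^{-z}`;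
splitting `n` by parity and pulling out `4^{-z}` turns this into
`2^{1-2z} Γ(z) (ζ(z, a/4+1/4) - ζ(z, a/4+3/4))`. Both sides are holomorphic on `Re z > 0` (the
poles of the two Hurwitz zeta functions at `z = 1` cancel), so the identity extends there by
analytic continuation.
-/

open MeasureTheory

/-- The Hurwitz zeta function `ζ(s, q)` for a real parameter `q > 0` (analytically
continued in `s`), expressed via Mathlib's `HurwitzZeta.hurwitzZeta` on the unit
interval: `ζ(s,q) = ζ(s, fract q) - ∑_{k < ⌊q⌋} (fract q + k)^{-s}`. -/
noncomputable def hzeta (s : ℂ) (q : ℝ) : ℂ :=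
  HurwitzZeta.hurwitzZeta (↑(Int.fract q) : UnitAddCircle) s -
    ∑ k ∈ Finset.range ⌊q⌋₊, (((Int.fract q : ℝ) : ℂ) + (k : ℂ)) ^ (-s)

open Complex Set Asymptotics

lemma hasSum_hzeta_of_one_lt_re {q : ℝ} (hq : 0 < q) {z : ℂ} (hz : 1 < z.re) :
    HasSum (fun n : ℕ ↦ ((q + n : ℝ) : ℂ) ^ (-z)) (hzeta z q) := by
  have hfract : HasSum (fun n : ℕ ↦ ((Int.fract q : ℝ) + (n : ℂ)) ^ (-z))
      (HurwitzZeta.hurwitzZeta ((Int.fract q : ℝ) : UnitAddCircle) z) :=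
    (HurwitzZeta.hasSum_hurwitzZeta_of_one_lt_re
      ⟨Int.fract_nonneg q, (Int.fract_lt_one q).le⟩ hz).congr_fun fun n ↦ by
        rw [cpow_neg, one_div, add_comm]
  refine ((hasSum_nat_add_iff' ⌊q⌋₊).2 hfract).congr_fun fun n ↦ ?_
  have hshift : q + n = Int.fract q + ((n + ⌊q⌋₊ : ℕ) : ℝ) := by
    rw [Nat.cast_add, natCast_floor_eq_intCast_floor hq.le]
    linarith [Int.fract_add_floor q]
  rw [hshift]
  push_cast
  rfl

lemma differentiableAt_hzeta_sub_hzeta (q₁ q₂ : ℝ) {z : ℂ} (hz : z ≠ 0) :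
    DifferentiableAt ℂ (fun w ↦ hzeta w q₁ - hzeta w q₂) z := by
  have hsum (q : ℝ) : DifferentiableAt ℂ
      (fun w ↦ ∑ k ∈ Finset.range ⌊q⌋₊, (((Int.fract q : ℝ) : ℂ) + (k : ℂ)) ^ (-w)) z :=
    DifferentiableAt.fun_sum fun k _ ↦
      differentiableAt_id.neg.const_cpow (Or.inr (neg_ne_zero.mpr hz))
  refine (((HurwitzZeta.differentiable_hurwitzZeta_sub_hurwitzZeta
    ((Int.fract q₁ : ℝ) : UnitAddCircle) ((Int.fract q₂ : ℝ) : UnitAddCircle)) z).fun_sub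
    ((hsum q₁).fun_sub (hsum q₂))).congr_of_eventuallyEq (.of_forall fun w ↦ ?_)
  simp only [hzeta]
  ring

lemma hasSum_exp_neg_mul_div_cosh (a : ℝ) {t : ℝ} (ht : 0 < t) :
    HasSum (fun n : ℕ ↦ 2 * (-1) ^ n * Real.exp (-(a + (2 * n + 1)) * t))
      (Real.exp (-a * t) / Real.cosh t) := by
  have hr : ‖-Real.exp (-2 * t)‖ < 1 := by
    rw [norm_neg, Real.norm_of_nonneg (Real.exp_pos _).le, Real.exp_lt_one_iff]
    linarith
  have hcosh : Real.cosh t = Real.exp t * (1 + Real.exp (-2 * t)) / 2 := by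
    rw [Real.cosh_eq, mul_add, ← Real.exp_add]
    ring_nf
  have hexp : Real.exp (-a * t) = Real.exp (-(a + 1) * t) * Real.exp t := by
    rw [← Real.exp_add]
    ring_nf
  have hval : Real.exp (-a * t) / Real.cosh t =
      2 * Real.exp (-(a + 1) * t) * (1 - -Real.exp (-2 * t))⁻¹ := by
    rw [hcosh, hexp, sub_neg_eq_add]
    field_simp
  rw [hval]
  refine ((hasSum_geometric_of_norm_lt_one hr).mul_left _).congr_fun fun n ↦ ?_
  have hsplit : Real.exp (-(a + (2 * n + 1)) * t) =
      Real.exp (-(a + 1) * t) * Real.exp (n * (-2 * t)) := by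
    rw [← Real.exp_add]
    ring_nf
  rw [neg_pow (Real.exp _), ← Real.exp_nat_mul, hsplit]
  ring

lemma exp_neg_mul_div_cosh_le (a t : ℝ) :
    Real.exp (-a * t) / Real.cosh t ≤ 2 * Real.exp (-(a + 1) * t) := by
  have hexp : Real.exp (-a * t) = Real.exp (-(a + 1) * t) * Real.exp t := by
    rw [← Real.exp_add]
    ring_nf
  rw [div_le_iff₀ (Real.cosh_pos t), Real.cosh_eq, hexp]
  nlinarith [mul_pos (Real.exp_pos (-(a + 1) * t)) (Real.exp_pos (-t))]

lemma summable_one_div_add_two_mul_add_one_rpow {a σ : ℝ} (ha : -1 < a) (hσ : 1 < σ) :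
    Summable fun n : ℕ ↦ 1 / (a + (2 * n + 1)) ^ σ := by
  refine (((Real.summable_one_div_nat_add_rpow ((a + 1) / 2) σ).2 hσ).mul_left
    (2 ^ σ)⁻¹).congr fun n ↦ ?_
  have hn : 0 ≤ (n : ℝ) + (a + 1) / 2 := by linarith [n.cast_nonneg (α := ℝ)]
  rw [abs_of_nonneg hn, show a + (2 * n + 1) = 2 * (n + (a + 1) / 2) by ring,
    Real.mul_rpow zero_le_two hn]
  field_simp

lemma two_cpow_one_sub_two_mul_mul_cpow_neg {x : ℝ} (hx : 0 ≤ x) (z : ℂ) :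
    (2 : ℂ) ^ (1 - 2 * z) * ((x / 4 : ℝ) : ℂ) ^ (-z) = 2 / (x : ℂ) ^ z := by
  have hsplit : (x : ℂ) = ((x / 4 : ℝ) : ℂ) * ((4 : ℝ) : ℂ) := by push_cast; ring
  have htwo : (2 : ℂ) ^ (1 - 2 * z) = 2 * 2 ^ (-z) * 2 ^ (-z) := by
    rw [show 1 - 2 * z = 1 + (-z + -z) by ring, cpow_add _ _ two_ne_zero,
      cpow_add _ _ two_ne_zero, cpow_one, mul_assoc]
  rw [div_eq_mul_inv (2 : ℂ), ← cpow_neg, hsplit,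
    mul_cpow_ofReal_nonneg (by positivity) zero_le_four,
    show ((4 : ℝ) : ℂ) = ((2 : ℝ) : ℂ) * ((2 : ℝ) : ℂ) by norm_num,
    mul_cpow_ofReal_nonneg zero_le_two zero_le_two, htwo]
  push_cast
  ring

lemma mellin_exp_neg_mul_div_cosh_of_one_lt_re {a : ℝ} (ha : -1 < a) {z : ℂ} (hz : 1 < z.re) :
    mellin (fun t : ℝ ↦ ((Real.exp (-a * t) / Real.cosh t : ℝ) : ℂ)) z =
      2 ^ (1 - 2 * z) * Gamma z * (hzeta z (a / 4 + 1 / 4) - hzeta z (a / 4 + 3 / 4)) := by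
  have hp (n : ℕ) : 0 < a + (2 * n + 1) := by linarith [n.cast_nonneg (α := ℝ)]
  have hseries := hasSum_mellin (a := fun n : ℕ ↦ 2 * (-1) ^ n) (p := fun n ↦ a + (2 * n + 1))
    (F := fun t : ℝ ↦ ((Real.exp (-a * t) / Real.cosh t : ℝ) : ℂ))
    (fun n ↦ .inr (hp n)) (zero_lt_one.trans hz)
    (fun t ht ↦ (hasSum_ofReal.2 (hasSum_exp_neg_mul_div_cosh a ht)).congr_fun fun n ↦ by
      push_cast; ring)
    (((summable_one_div_add_two_mul_add_one_rpow ha hz).mul_left 2).congr fun n ↦ by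
      simp [div_eq_mul_inv])
  set c := (2 : ℂ) ^ (1 - 2 * z) * Gamma z
  have hEven : HasSum (fun k : ℕ ↦ Gamma z * (2 * (-1) ^ (2 * k)) /
      ((a + (2 * ((2 * k : ℕ) : ℝ) + 1) : ℝ) : ℂ) ^ z) (c * hzeta z (a / 4 + 1 / 4)) := by
    refine ((hasSum_hzeta_of_one_lt_re (by linarith) hz).mul_left c).congr_fun fun k ↦ ?_
    rw [pow_mul, neg_one_sq, one_pow, mul_one, mul_div_assoc,
      ← two_cpow_one_sub_two_mul_mul_cpow_neg (hp _).le]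
    simp only [c]
    push_cast
    ring_nf
  have hOdd : HasSum (fun k : ℕ ↦ Gamma z * (2 * (-1) ^ (2 * k + 1)) /
      ((a + (2 * ((2 * k + 1 : ℕ) : ℝ) + 1) : ℝ) : ℂ) ^ z) (-(c * hzeta z (a / 4 + 3 / 4))) := by
    refine ((hasSum_hzeta_of_one_lt_re (by linarith) hz).mul_left c).neg.congr_fun fun k ↦ ?_
    rw [pow_succ, pow_mul, neg_one_sq, one_pow, one_mul, mul_neg_one, mul_neg, neg_div,
      mul_div_assoc, ← two_cpow_one_sub_two_mul_mul_cpow_neg (hp _).le]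
    simp only [c]
    push_cast
    ring_nf
  rw [hseries.unique (hEven.even_add_odd hOdd)]
  ring

lemma differentiableAt_mellin_exp_neg_mul_div_cosh {a : ℝ} (ha : -1 < a) {z : ℂ}
    (hz : 0 < z.re) :
    DifferentiableAt ℂ (mellin fun t : ℝ ↦ ((Real.exp (-a * t) / Real.cosh t : ℝ) : ℂ)) z := by
  have hcont : Continuous fun t : ℝ ↦ ((Real.exp (-a * t) / Real.cosh t : ℝ) : ℂ) :=
    continuous_ofReal.comp <| by
      fun_prop (disch := exact fun t ↦ (Real.cosh_pos t).ne')
  have hbound (t : ℝ) :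
      ‖((Real.exp (-a * t) / Real.cosh t : ℝ) : ℂ)‖ ≤ 2 * Real.exp (-(a + 1) * t) := by
    rw [norm_real, Real.norm_of_nonneg (by positivity)]
    exact exp_neg_mul_div_cosh_le a t
  refine mellin_differentiableAt_of_isBigO_rpow_exp (by linarith : 0 < a + 1) (b := 0)
    (hcont.locallyIntegrable.locallyIntegrableOn _) ?_ ?_ (by simpa using hz)
  · refine IsBigO.of_bound 2 (.of_forall fun t ↦ ?_)
    simpa using hbound t
  · refine IsBigO.of_bound 2 (eventually_nhdsWithin_of_forall fun t (ht : 0 < t) ↦ ?_)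
    have : Real.exp (-(a + 1) * t) ≤ 1 := Real.exp_le_one_iff.2 (by nlinarith)
    simpa using (hbound t).trans (by linarith)

lemma differentiableAt_two_cpow_mul_Gamma_mul_hzeta_sub_hzeta (q₁ q₂ : ℝ) {z : ℂ}
    (hz : 0 < z.re) :
    DifferentiableAt ℂ
      (fun w ↦ (2 : ℂ) ^ (1 - 2 * w) * Gamma w * (hzeta w q₁ - hzeta w q₂)) z := by
  have hGamma : DifferentiableAt ℂ Gamma z :=
    differentiableAt_Gamma z fun m hm ↦ by simp [hm] at hz; linarith
  refine ((((differentiableAt_const 1).sub (differentiableAt_id.const_mul 2)).const_cpow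
    (.inl two_ne_zero)).mul hGamma).mul (differentiableAt_hzeta_sub_hzeta q₁ q₂ ?_)
  rintro rfl
  simp at hz

theorem mellin_exp_neg_mul_div_cosh {a : ℝ} (ha : -1 < a) {z : ℂ} (hz : 0 < z.re) :
    mellin (fun t : ℝ ↦ ((Real.exp (-a * t) / Real.cosh t : ℝ) : ℂ)) z =
      2 ^ (1 - 2 * z) * Gamma z * (hzeta z (a / 4 + 1 / 4) - hzeta z (a / 4 + 3 / 4)) := by
  have hU : IsOpen {w : ℂ | 0 < w.re} := isOpen_lt continuous_const continuous_re
  have hlhs := DifferentiableOn.analyticOnNhd (fun w hw ↦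
    (differentiableAt_mellin_exp_neg_mul_div_cosh ha hw).differentiableWithinAt) hU
  have hrhs := DifferentiableOn.analyticOnNhd (fun w hw ↦
    (differentiableAt_two_cpow_mul_Gamma_mul_hzeta_sub_hzeta (a / 4 + 1 / 4) (a / 4 + 3 / 4)
      hw).differentiableWithinAt) hU
  refine hlhs.eqOn_of_preconnected_of_eventuallyEq hrhs (convex_halfSpace_re_gt 0).isPreconnected
    (z₀ := 2) (show (0 : ℝ) < (2 : ℂ).re by simp) ?_ hz
  filter_upwards [(isOpen_lt continuous_const continuous_re).mem_nhds
    (by simp : (1 : ℝ) < (2 : ℂ).re)] with w hw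
  exact mellin_exp_neg_mul_div_cosh_of_one_lt_re ha hw

lemma mellin_ofReal (f : ℝ → ℝ) (s : ℝ) :
    mellin (fun t ↦ (f t : ℂ)) s = ↑(∫ t in Ioi 0, t ^ (s - 1) * f t) := by
  refine (setIntegral_congr_fun measurableSet_Ioi fun t (ht : 0 < t) ↦ ?_).trans integral_ofReal
  change _ = ((t ^ (s - 1) * f t : ℝ) : ℂ)
  rw [smul_eq_mul, ofReal_mul, ofReal_cpow ht.le, ofReal_sub, ofReal_one]

/-- `∫_0^∞ v^{s-1} e^{-av} / cosh v dv = 2^{1-2s} Γ(s) (ζ(s,a/4+1/4) - ζ(s,a/4+3/4))`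
for real `s > 0`, `a > 0`. -/
theorem integral_exp_div_cosh (s a : ℝ) (hs : 0 < s) (ha : 0 < a) :
    (↑(∫ v in Set.Ioi (0 : ℝ), v ^ (s - 1) * Real.exp (-a * v) / Real.cosh v) : ℂ) =
      2 ^ (1 - 2 * (s : ℂ)) * Complex.Gamma s *
        (hzeta s (a / 4 + 1 / 4) - hzeta s (a / 4 + 3 / 4)) := by
  have h := mellin_exp_neg_mul_div_cosh (by linarith : -1 < a) (z := s) (by simpa using hs)
  rw [mellin_ofReal] at h
  simpa only [mul_div_assoc] using h
end

section
/- For real s > 0 and real a > 0, the integral ∫_0^∞ e^(-a w) w^s sinh(w) / cosh(w)^2 dw equals 2^(-2s) Γ(s+1) (2(ζ(s,q) - ζ(s,q+1/2)) - (a/2)(ζ(s+1,q) - ζ(s+1,q+1/2))), where q = a/4 + 1/4. -/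
/-!
Expanding in `e^{-t}` gives `sinh t / cosh² t = 2 ∑ (-1)ⁿ (2n+1) e^{-(2n+1)t}`, so for `re s > 1`
the Mellin transform of `e^{-at} sinh t / cosh² t` at `s + 1` is, term by term,
`Γ(s+1) ∑ 2 (-1)ⁿ (2n+1) (a+2n+1)^{-s-1}`. Writing `2n+1 = (a+2n+1) - a` splits it into the
alternating series `∑ (-1)ⁿ (a+2n+1)^{-z}` at `z = s` and `z = s+1`, and sorting `n` by parity
turns each into `4^{-z} (ζ(z,q) - ζ(z,q+1/2))` with `q = (a+1)/4`. Both sides are holomorphic on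
`re s > 0` (the poles at `z = 1` of the two Hurwitz zeta values cancel), so the identity theorem
extends the formula from `re s > 1`.
-/

open MeasureTheory

open Complex Set Filter Asymptotics

lemma hasSum_hzeta {q : ℝ} (hq : 0 < q) {s : ℂ} (hs : 1 < s.re) :
    HasSum (fun n : ℕ => ((n + q : ℝ) : ℂ) ^ (-s)) (hzeta s q) := by
  have hfract := (hasSum_nat_add_iff' ⌊q⌋₊).mpr <| HurwitzZeta.hasSum_hurwitzZeta_of_one_lt_re
    ⟨Int.fract_nonneg q, (Int.fract_lt_one q).le⟩ hs
  have hq_eq : (⌊q⌋₊ : ℝ) + Int.fract q = q := by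
    rw [natCast_floor_eq_intCast_floor hq.le, Int.floor_add_fract]
  have hval : hzeta s q = HurwitzZeta.hurwitzZeta (Int.fract q : ℝ) s -
      ∑ i ∈ Finset.range ⌊q⌋₊, 1 / ((i : ℂ) + (Int.fract q : ℝ)) ^ s := by
    refine congrArg _ (Finset.sum_congr rfl fun k _ => ?_)
    rw [cpow_neg, one_div, add_comm]
  refine hval ▸ hfract.congr_fun fun n => ?_
  conv_lhs => rw [← hq_eq]
  push_cast
  rw [cpow_neg, one_div, add_assoc]

lemma differentiableAt_hzeta_sub_hzeta_s8 (q q' : ℝ) {s : ℂ} (hs : s ≠ 0) :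
    DifferentiableAt ℂ (fun z => hzeta z q - hzeta z q') s := by
  have hsum (x : ℝ) : DifferentiableAt ℂ
      (fun z => ∑ k ∈ Finset.range ⌊x⌋₊, (((Int.fract x : ℝ) : ℂ) + (k : ℂ)) ^ (-z)) s :=
    DifferentiableAt.fun_sum fun k _ =>
      differentiableAt_id.neg.const_cpow (Or.inr (neg_ne_zero.mpr hs))
  have hzeta_sub := HurwitzZeta.differentiable_hurwitzZeta_sub_hurwitzZeta
    ((Int.fract q : ℝ) : UnitAddCircle) ((Int.fract q' : ℝ) : UnitAddCircle) s
  refine ((hzeta_sub.sub (hsum q)).add (hsum q')).congr_of_eventuallyEq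
    (Eventually.of_forall fun z => ?_)
  simp only [hzeta, Pi.add_apply, Pi.sub_apply]
  ring

lemma ofReal_four_mul_cpow_neg {x : ℝ} (hx : 0 ≤ x) (z : ℂ) :
    ((4 * x : ℝ) : ℂ) ^ (-z) = 2 ^ (-2 * z) * (x : ℂ) ^ (-z) := by
  have h4 : ((4 : ℝ) : ℂ) ^ (-z) = 2 ^ (-2 * z) := by
    rw [show (4 : ℝ) = 2 * 2 by norm_num, ofReal_mul,
      mul_cpow_ofReal_nonneg zero_le_two zero_le_two, ← cpow_add _ _ (by norm_num)]
    push_cast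
    ring_nf
  rw [ofReal_mul, mul_cpow_ofReal_nonneg (by norm_num) hx, h4]

lemma hasSum_neg_one_pow_mul_cpow {q : ℝ} (hq : 0 < q) {z : ℂ} (hz : 1 < z.re) :
    HasSum (fun n : ℕ => (-1 : ℂ) ^ n * ((4 * q + 2 * n : ℝ) : ℂ) ^ (-z))
      (2 ^ (-2 * z) * (hzeta z q - hzeta z (q + 1 / 2))) := by
  have heven := (hasSum_hzeta hq hz).mul_left (2 ^ (-2 * z))
  have hodd := ((hasSum_hzeta (by positivity : 0 < q + 1 / 2) hz).mul_left (2 ^ (-2 * z))).neg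
  rw [mul_sub, sub_eq_add_neg]
  refine HasSum.even_add_odd (heven.congr_fun fun k => ?_) (hodd.congr_fun fun k => ?_)
  · rw [pow_mul, neg_one_sq, one_pow, one_mul, ← ofReal_four_mul_cpow_neg (by positivity)]
    push_cast
    ring_nf
  · rw [pow_succ, pow_mul, neg_one_sq, one_pow, one_mul,
      ← ofReal_four_mul_cpow_neg (by positivity)]
    push_cast
    ring_nf

lemma hasSum_two_mul_add_one_mul_geometric {𝕜 : Type*} [NormedField 𝕜] [CompleteSpace 𝕜]
    {r : 𝕜} (hr : ‖r‖ < 1) :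
    HasSum (fun n : ℕ => (2 * n + 1) * r ^ n) ((1 + r) / (1 - r) ^ 2) := by
  have hr1 : 1 - r ≠ 0 := sub_ne_zero.mpr fun h => by simp [← h] at hr
  have hsum := ((hasSum_coe_mul_geometric_of_norm_lt_one hr).mul_left 2).add
    (hasSum_geometric_of_norm_lt_one hr)
  rw [show (1 + r) / (1 - r) ^ 2 = 2 * (r / (1 - r) ^ 2) + (1 - r)⁻¹ by field_simp; ring]
  exact hsum.congr_fun fun n => by ring

lemma abs_sinh_div_cosh_sq_le_one (t : ℝ) : |Real.sinh t / Real.cosh t ^ 2| ≤ 1 := by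
  rw [abs_div, abs_of_pos (by positivity : 0 < Real.cosh t ^ 2), div_le_one (by positivity)]
  calc |Real.sinh t| ≤ Real.cosh t := by
        rw [Real.abs_sinh, ← Real.cosh_abs t]
        exact (Real.sinh_lt_cosh _).le
    _ ≤ Real.cosh t ^ 2 := le_self_pow₀ (Real.one_le_cosh t) two_ne_zero

lemma hasSum_exp_mul_sinh_div_cosh_sq (a : ℝ) {t : ℝ} (ht : 0 < t) :
    HasSum (fun n : ℕ => 2 * (-1) ^ n * (2 * n + 1) * Real.exp (-(a + 2 * n + 1) * t))
      (Real.exp (-a * t) * Real.sinh t / Real.cosh t ^ 2) := by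
  set u := Real.exp (-t) with hu
  have hu0 : 0 < u := Real.exp_pos _
  have hu_sq : ‖-u ^ 2‖ < 1 := by
    rw [norm_neg, norm_pow, Real.norm_of_nonneg hu0.le]
    exact pow_lt_one₀ hu0.le (Real.exp_lt_one_iff.mpr (neg_lt_zero.mpr ht)) two_ne_zero
  have hval : 2 * Real.exp (-a * t) * u * ((1 + -u ^ 2) / (1 - -u ^ 2) ^ 2) =
      Real.exp (-a * t) * Real.sinh t / Real.cosh t ^ 2 := by
    rw [Real.sinh_eq, Real.cosh_eq, ← hu, show Real.exp t = u⁻¹ by rw [hu, Real.exp_neg, inv_inv],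
      sub_neg_eq_add, ← sub_eq_add_neg]
    field_simp
  have hexp (n : ℕ) : Real.exp (-(a + 2 * n + 1) * t) = Real.exp (-a * t) * u ^ (2 * n + 1) := by
    rw [hu, ← Real.exp_nat_mul, ← Real.exp_add]
    push_cast
    ring_nf
  refine hval ▸ ((hasSum_two_mul_add_one_mul_geometric hu_sq).mul_left _).congr_fun fun n => ?_
  rw [hexp, neg_pow (u ^ 2), ← pow_mul]
  ring

lemma summable_two_mul_add_one_div_rpow {a : ℝ} (ha : 0 ≤ a) {σ : ℝ} (hσ : 1 < σ) :
    Summable fun n : ℕ => (2 * n + 1) / (a + 2 * n + 1) ^ (σ + 1) := by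
  have hshift : Summable fun n : ℕ => 1 / ((n : ℝ) + 1) ^ σ := by
    simpa using (summable_nat_add_iff 1).mpr (Real.summable_one_div_nat_rpow.mpr hσ)
  refine hshift.of_nonneg_of_le (fun n => by positivity) fun n => ?_
  have hp : (0 : ℝ) < a + 2 * n + 1 := by positivity
  calc (2 * n + 1) / (a + 2 * n + 1) ^ (σ + 1)
      ≤ (a + 2 * n + 1) / (a + 2 * n + 1) ^ (σ + 1) := by gcongr; linarith
    _ = 1 / (a + 2 * n + 1) ^ σ := by
      rw [Real.rpow_add_one hp.ne', div_mul_cancel_right₀ hp.ne', one_div]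
    _ ≤ 1 / ((n : ℝ) + 1) ^ σ := by gcongr; linarith

lemma eqOn_re_pos_of_eqOn_one_lt_re {f g : ℂ → ℂ} (hf : DifferentiableOn ℂ f {z | 0 < z.re})
    (hg : DifferentiableOn ℂ g {z | 0 < z.re}) (hfg : EqOn f g {z | 1 < z.re}) :
    EqOn f g {z | 0 < z.re} := by
  have hU : IsOpen {z : ℂ | 0 < z.re} := isOpen_lt continuous_const continuous_re
  refine (hf.analyticOnNhd hU).eqOn_of_preconnected_of_eventuallyEq (hg.analyticOnNhd hU)
    (convex_halfSpace_re_gt 0).isPreconnected (z₀ := 2) (by simp) ?_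
  filter_upwards [(isOpen_lt continuous_const continuous_re).mem_nhds
    (show (1 : ℝ) < (2 : ℂ).re by simp)] with z hz using hfg hz

lemma differentiableAt_Gamma_add_one {s : ℂ} (hs : 0 < s.re) :
    DifferentiableAt ℂ (fun z => Gamma (z + 1)) s := by
  refine (differentiableAt_Gamma _ fun m hm => ?_).comp s (differentiableAt_id.add_const 1)
  have := congrArg re hm
  simp only [add_re, one_re, neg_re, natCast_re] at this
  linarith [(m.cast_nonneg : (0 : ℝ) ≤ m)]

noncomputable def expMulSinhDivCoshSq (a t : ℝ) : ℂ :=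
  (Real.exp (-a * t) * Real.sinh t / Real.cosh t ^ 2 : ℝ)

lemma mellin_expMulSinhDivCoshSq_of_one_lt_re {a : ℝ} (ha : 0 < a) {s : ℂ} (hs : 1 < s.re) :
    mellin (expMulSinhDivCoshSq a) (s + 1) = 2 ^ (-2 * s) * Gamma (s + 1) *
      (2 * (hzeta s (a / 4 + 1 / 4) - hzeta s (a / 4 + 1 / 4 + 1 / 2)) -
        (a / 2 : ℂ) *
          (hzeta (s + 1) (a / 4 + 1 / 4) - hzeta (s + 1) (a / 4 + 1 / 4 + 1 / 2))) := by
  set p : ℕ → ℝ := fun n => a + 2 * n + 1 with hp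
  have hp_pos (n : ℕ) : 0 < p n := by positivity
  have hs1 : 1 < (s + 1).re := by rw [add_re, one_re]; linarith
  have hmellin : HasSum
      (fun n : ℕ => Gamma (s + 1) * (2 * (-1) ^ n * (2 * n + 1) : ℂ) / (p n : ℂ) ^ (s + 1))
      (mellin (expMulSinhDivCoshSq a) (s + 1)) := by
    refine hasSum_mellin (fun n => Or.inr (hp_pos n)) (by linarith) (fun t ht => ?_) ?_
    · refine (hasSum_ofReal.mpr (hasSum_exp_mul_sinh_div_cosh_sq a ht)).congr_fun fun n => ?_
      simp only [hp]
      push_cast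
      rfl
    · refine ((summable_two_mul_add_one_div_rpow ha.le (σ := s.re) (by linarith)).mul_left 2).congr
        fun n => ?_
      rw [show (2 * n + 1 : ℂ) = ((2 * n + 1 : ℝ) : ℂ) by push_cast; rfl]
      simp only [hp, norm_mul, norm_pow, norm_neg, norm_one, one_pow, Complex.norm_real,
        Real.norm_of_nonneg (by positivity : (0 : ℝ) ≤ 2 * n + 1), add_re, one_re]
      norm_num
      ring
  have hdirichlet (z : ℂ) (hz : 1 < z.re) :
      HasSum (fun n : ℕ => (-1 : ℂ) ^ n * (p n : ℂ) ^ (-z))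
      (2 ^ (-2 * z) * (hzeta z (a / 4 + 1 / 4) - hzeta z (a / 4 + 1 / 4 + 1 / 2))) :=
    (hasSum_neg_one_pow_mul_cpow (by positivity) hz).congr_fun fun n => by congr 3; ring
  have hsplit := (((hdirichlet s hs).mul_left 2).sub
    ((hdirichlet (s + 1) hs1).mul_left (2 * (a : ℂ)))).mul_left (Gamma (s + 1))
  rw [hmellin.unique (hsplit.congr_fun fun n => ?_)]
  · have h4 : (2 : ℂ) ^ (-2 * (s + 1)) = 2 ^ (-2 * s) / 4 := by
      rw [show -2 * (s + 1) = -2 * s + -2 by ring, cpow_add _ _ two_ne_zero, cpow_neg,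
        show (2 : ℂ) ^ (2 : ℂ) = 4 by norm_num]
      ring
    rw [h4]
    ring
  · have hp0 : (p n : ℂ) ≠ 0 := ofReal_ne_zero.mpr (hp_pos n).ne'
    have hodd : (2 * n + 1 : ℂ) = p n - a := by simp only [hp]; push_cast; ring
    rw [div_eq_mul_inv, ← cpow_neg, show -s = -(s + 1) + 1 by ring, cpow_add _ _ hp0, cpow_one,
      hodd]
    ring

lemma norm_expMulSinhDivCoshSq_le (a t : ℝ) : ‖expMulSinhDivCoshSq a t‖ ≤ Real.exp (-a * t) := by
  rw [expMulSinhDivCoshSq, Complex.norm_real, Real.norm_eq_abs, mul_div_assoc, abs_mul,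
    abs_of_pos (Real.exp_pos _)]
  exact mul_le_of_le_one_right (Real.exp_pos _).le (abs_sinh_div_cosh_sq_le_one t)

lemma continuous_expMulSinhDivCoshSq (a : ℝ) : Continuous (expMulSinhDivCoshSq a) :=
  continuous_ofReal.comp <| by fun_prop (disch := intro; positivity)

lemma differentiableAt_mellin_expMulSinhDivCoshSq {a : ℝ} (ha : 0 < a) {s : ℂ} (hs : 0 < s.re) :
    DifferentiableAt ℂ (mellin (expMulSinhDivCoshSq a)) s := by
  have hcont := continuous_expMulSinhDivCoshSq a
  refine mellin_differentiableAt_of_isBigO_rpow_exp (b := 0) ha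
    (hcont.continuousOn.locallyIntegrableOn measurableSet_Ioi)
    (IsBigO.of_norm_le (norm_expMulSinhDivCoshSq_le a)) ?_ hs
  simpa using ((hcont.tendsto 0).isBigO_one ℝ).mono nhdsWithin_le_nhds

lemma mellin_expMulSinhDivCoshSq {a : ℝ} (ha : 0 < a) {s : ℂ} (hs : 0 < s.re) :
    mellin (expMulSinhDivCoshSq a) (s + 1) = 2 ^ (-2 * s) * Gamma (s + 1) *
      (2 * (hzeta s (a / 4 + 1 / 4) - hzeta s (a / 4 + 1 / 4 + 1 / 2)) -
        (a / 2 : ℂ) *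
          (hzeta (s + 1) (a / 4 + 1 / 4) - hzeta (s + 1) (a / 4 + 1 / 4 + 1 / 2))) := by
  refine eqOn_re_pos_of_eqOn_one_lt_re (fun z hz => ?_) (fun z hz => ?_)
    (fun z hz => mellin_expMulSinhDivCoshSq_of_one_lt_re ha hz) hs
  · have hz1 : 0 < (z + 1).re := by rw [add_re, one_re]; linarith [hz.out]
    exact ((differentiableAt_mellin_expMulSinhDivCoshSq ha hz1).comp z
      (differentiableAt_id.add_const 1)).differentiableWithinAt
  · have hz0 : z ≠ 0 := fun h => by simp [h] at hz
    have hz1 : z + 1 ≠ 0 := fun h => by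
      have := congrArg re h
      simp only [add_re, one_re, zero_re] at this
      linarith [hz.out]
    have hpow : DifferentiableAt ℂ (fun z : ℂ => (2 : ℂ) ^ (-2 * z)) z :=
      (differentiableAt_id.const_mul _).const_cpow (Or.inl two_ne_zero)
    have hzeta_s :=
      differentiableAt_hzeta_sub_hzeta_s8 (a / 4 + 1 / 4) (a / 4 + 1 / 4 + 1 / 2) hz0
    have hzeta_s1 := (differentiableAt_hzeta_sub_hzeta_s8 (a / 4 + 1 / 4) (a / 4 + 1 / 4 + 1 / 2)
      hz1).comp z (differentiableAt_id.add_const 1)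
    exact ((hpow.mul (differentiableAt_Gamma_add_one hz)).mul
      ((hzeta_s.const_mul 2).sub (hzeta_s1.const_mul _))).differentiableWithinAt

lemma ofReal_setIntegral_rpow_mul_eq_mellin (f : ℝ → ℝ) (s : ℝ) :
    ((∫ t in Ioi 0, t ^ s * f t : ℝ) : ℂ) = mellin (fun t => (f t : ℂ)) (s + 1) := by
  rw [mellin, ← integral_complex_ofReal]
  refine setIntegral_congr_fun measurableSet_Ioi fun t ht => ?_
  rw [smul_eq_mul, add_sub_cancel_right, ← ofReal_cpow (le_of_lt ht), ofReal_mul]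

/-- `∫_0^∞ e^{-aw} w^s sinh w / cosh² w dw
  = 2^{-2s} Γ(s+1) (2(ζ(s,q)-ζ(s,q+1/2)) - (a/2)(ζ(s+1,q)-ζ(s+1,q+1/2)))`
with `q = a/4 + 1/4`, for real `s > 0`, `a > 0`. -/
theorem integral_sinh_div_cosh_sq (s a : ℝ) (hs : 0 < s) (ha : 0 < a) :
    (↑(∫ w in Set.Ioi (0 : ℝ),
        Real.exp (-a * w) * w ^ s * Real.sinh w / (Real.cosh w) ^ 2) : ℂ) =
      2 ^ (-2 * (s : ℂ)) * Complex.Gamma (s + 1) *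
        (2 * (hzeta s (a / 4 + 1 / 4) - hzeta s (a / 4 + 1 / 4 + 1 / 2)) -
          (a / 2 : ℂ) * (hzeta (s + 1) (a / 4 + 1 / 4) - hzeta (s + 1) (a / 4 + 1 / 4 + 1 / 2))) := by
  have hintegrand : (fun w : ℝ => Real.exp (-a * w) * w ^ s * Real.sinh w / Real.cosh w ^ 2) =
      fun w => w ^ s * (Real.exp (-a * w) * Real.sinh w / Real.cosh w ^ 2) := by
    funext w
    ring
  rw [hintegrand, ofReal_setIntegral_rpow_mul_eq_mellin]
  exact mellin_expMulSinhDivCoshSq ha (by simpa using hs)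
end

section
/- The digamma function satisfies ψ(7/8) - ψ(3/8) = √2 (π - 2 log(√2 + 1)). -/
/-!
Since `ψ (x + 1) = ψ x + x⁻¹` and `log ∘ Γ` is convex, comparing `ψ x` with the slopes of
`log ∘ Γ` over `[x - 1, x]` and `[x, x + 1]` gives `log x - x⁻¹ ≤ ψ x ≤ log x`; hence
`ψ b - ψ a = ∑ₘ ((a + m)⁻¹ - (b + m)⁻¹)`. For `a = 3/8`, `b = 7/8` the `m`-th term is
`8 ∫₀¹ (x^(8m+2) - x^(8m+6)) dx`, and these sum to `∫₀¹ 8x² / (1 + x⁴) dx`, which an explicit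
log–arctan antiderivative evaluates to `√2 (π - 2 log (√2 + 1))`.
-/

noncomputable def digamma (x : ℝ) : ℝ := deriv (fun y : ℝ => Real.log (Real.Gamma y)) x

open Real Set Filter Topology

lemma differentiableAt_log_Gamma {x : ℝ} (hx : 0 < x) :
    DifferentiableAt ℝ (fun y => log (Gamma y)) x :=
  (differentiableAt_Gamma fun m => by linarith [(Nat.cast_nonneg m : (0:ℝ) ≤ m)]).log
    (Gamma_pos_of_pos hx).ne'

lemma log_Gamma_add_one {x : ℝ} (hx : 0 < x) :
    log (Gamma (x + 1)) = log (Gamma x) + log x := by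
  rw [Gamma_add_one hx.ne', log_mul hx.ne' (Gamma_pos_of_pos hx).ne', add_comm]

lemma digamma_add_one {x : ℝ} (hx : 0 < x) : digamma (x + 1) = digamma x + x⁻¹ := by
  have hshift : (fun y => log (Gamma (y + 1))) =ᶠ[𝓝 x] fun y => log (Gamma y) + log y := by
    filter_upwards [eventually_gt_nhds hx] with y hy using log_Gamma_add_one hy
  rw [digamma, ← deriv_comp_add_const, hshift.deriv_eq,
    deriv_fun_add (differentiableAt_log_Gamma hx) (differentiableAt_log hx.ne'), deriv_log, digamma]

lemma digamma_add_nat {x : ℝ} (hx : 0 < x) (n : ℕ) :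
    digamma (x + n) = digamma x + ∑ m ∈ Finset.range n, (x + m)⁻¹ := by
  induction n with
  | zero => simp
  | succ n ih =>
    rw [Nat.cast_succ, ← add_assoc, digamma_add_one (by positivity), ih, Finset.sum_range_succ,
      add_assoc]

lemma digamma_le_log {x : ℝ} (hx : 0 < x) : digamma x ≤ log x := by
  have h := convexOn_log_Gamma.deriv_le_slope (mem_Ioi.mpr hx) (mem_Ioi.mpr (by linarith))
    (lt_add_one x) (differentiableAt_log_Gamma hx)
  rwa [slope_def_field, Function.comp_apply, Function.comp_apply, log_Gamma_add_one hx,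
    add_sub_cancel_left, add_sub_cancel_left, div_one] at h

lemma log_le_digamma_add_one {x : ℝ} (hx : 0 < x) : log x ≤ digamma (x + 1) := by
  have h := convexOn_log_Gamma.slope_le_deriv (mem_Ioi.mpr hx) (mem_Ioi.mpr (by linarith))
    (lt_add_one x) (differentiableAt_log_Gamma (by linarith))
  rwa [slope_def_field, Function.comp_apply, Function.comp_apply, log_Gamma_add_one hx,
    add_sub_cancel_left, add_sub_cancel_left, div_one] at h

lemma tendsto_digamma_sub_log_atTop : Tendsto (fun x => digamma x - log x) atTop (𝓝 0) := by
  refine tendsto_of_tendsto_of_tendsto_of_le_of_le' (g := fun x => -x⁻¹) (h := 0)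
    (by simpa using (tendsto_inv_atTop_zero (𝕜 := ℝ)).neg) tendsto_const_nhds ?_ ?_
  · filter_upwards [eventually_gt_atTop 0] with x hx
    have hlow := log_le_digamma_add_one hx
    rw [digamma_add_one hx] at hlow
    linarith
  · filter_upwards [eventually_gt_atTop 0] with x hx
    simpa using digamma_le_log hx

lemma tendsto_digamma_add_sub_digamma_atTop (c : ℝ) :
    Tendsto (fun x => digamma (x + c) - digamma x) atTop (𝓝 0) := by
  have h := ((tendsto_digamma_sub_log_atTop.comp (tendsto_atTop_add_const_right _ c tendsto_id)).sub
    tendsto_digamma_sub_log_atTop).add (tendsto_log_comp_add_sub_log c)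
  simp only [sub_zero, add_zero] at h
  refine h.congr fun x => ?_
  simp only [Function.comp_apply, id]
  ring

lemma tendsto_sum_inv_add_sub_inv_add {a b : ℝ} (ha : 0 < a) (hb : 0 < b) :
    Tendsto (fun n : ℕ => ∑ m ∈ Finset.range n, ((a + m)⁻¹ - (b + m)⁻¹)) atTop
      (𝓝 (digamma b - digamma a)) := by
  have h := ((tendsto_digamma_add_sub_digamma_atTop a).sub
    (tendsto_digamma_add_sub_digamma_atTop b)).comp tendsto_natCast_atTop_atTop
  rw [sub_zero] at h
  have h' := h.const_add (digamma b - digamma a)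
  rw [add_zero] at h'
  refine h'.congr fun n => ?_
  simp only [Function.comp_apply, Finset.sum_sub_distrib]
  rw [add_comm (n : ℝ) a, add_comm (n : ℝ) b, digamma_add_nat ha, digamma_add_nat hb]
  ring

lemma hasDerivAt_log_sub_log_add_arctan_add_arctan (x : ℝ) :
    HasDerivAt (fun y => √2 * (log (y ^ 2 - √2 * y + 1) - log (y ^ 2 + √2 * y + 1)) +
      2 * √2 * (arctan (√2 * y + 1) + arctan (√2 * y - 1))) (8 * x ^ 2 / (1 + x ^ 4)) x := by
  have h2 : √2 ^ 2 = 2 := sq_sqrt zero_le_two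
  have hminus : 0 < x ^ 2 - √2 * x + 1 := by nlinarith [sq_nonneg (2 * x - √2)]
  have hplus : 0 < x ^ 2 + √2 * x + 1 := by nlinarith [sq_nonneg (2 * x + √2)]
  have hlin : HasDerivAt (fun y => √2 * y) √2 x := by simpa using (hasDerivAt_id x).const_mul √2
  have hsq : HasDerivAt (fun y => y ^ 2) (2 * x) x := by simpa using hasDerivAt_pow 2 x
  have h := ((((hsq.sub hlin).add_const 1).log hminus.ne').sub
    (((hsq.add hlin).add_const 1).log hplus.ne')).const_mul √2 |>.add
    ((((hlin.add_const 1).arctan).add ((hlin.sub_const 1).arctan)).const_mul (2 * √2))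
  refine h.congr_deriv ?_
  simp only [Pi.add_apply, Pi.sub_apply]
  have hu : x * (x - √2) + 1 ≠ 0 := by linarith
  have hv : x * (x + √2) + 1 ≠ 0 := by linarith
  rw [show 1 + (√2 * x + 1) ^ 2 = 2 * (x ^ 2 + √2 * x + 1) by linear_combination x ^ 2 * h2,
    show 1 + (√2 * x - 1) ^ 2 = 2 * (x ^ 2 - √2 * x + 1) by linear_combination x ^ 2 * h2]
  field_simp
  linear_combination 4 * x ^ 2 * (1 + x ^ 2) ^ 2 * h2

lemma sum_range_sub_mul_one_add_pow_four {R : Type*} [CommRing R] (x : R) (n : ℕ) :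
    (∑ m ∈ Finset.range n, (x ^ (8 * m + 2) - x ^ (8 * m + 6))) * (1 + x ^ 4) =
      x ^ 2 - x ^ (8 * n + 2) := by
  induction n with
  | zero => simp
  | succ n ih =>
    rw [Finset.sum_range_succ, add_mul, ih]
    ring

lemma integral_eight_mul_pow_sub_pow (m : ℕ) :
    ∫ x in (0 : ℝ)..1, 8 * (x ^ (8 * m + 2) - x ^ (8 * m + 6)) =
      (3 / 8 + (m : ℝ))⁻¹ - (7 / 8 + (m : ℝ))⁻¹ := by
  rw [intervalIntegral.integral_const_mul, intervalIntegral.integral_sub, integral_pow,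
    integral_pow] <;> try exact intervalIntegral.intervalIntegrable_pow _
  push_cast
  field_simp
  ring

lemma tendsto_integral_pow_mul_of_continuousOn {g : ℝ → ℝ} (hg : ContinuousOn g (Icc 0 1)) :
    Tendsto (fun n : ℕ => ∫ x in (0 : ℝ)..1, x ^ n * g x) atTop (𝓝 0) := by
  obtain ⟨C, hC⟩ := isCompact_Icc.exists_bound_of_continuousOn hg
  have hbound (n : ℕ) : ‖∫ x in (0 : ℝ)..1, x ^ n * g x‖ ≤ C * (1 / (n + 1)) := by
    calc ‖∫ x in (0 : ℝ)..1, x ^ n * g x‖ ≤ ∫ x in (0 : ℝ)..1, C * x ^ n := by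
          refine intervalIntegral.norm_integral_le_of_norm_le zero_le_one
            (Eventually.of_forall fun x hx => ?_)
            ((intervalIntegral.intervalIntegrable_pow n).const_mul C)
          rw [norm_mul, norm_pow, Real.norm_of_nonneg hx.1.le, mul_comm]
          exact mul_le_mul_of_nonneg_right (hC x (Ioc_subset_Icc_self hx)) (by positivity [hx.1])
      _ = C * (1 / (n + 1)) := by simp [integral_pow]
  exact squeeze_zero_norm hbound
    (by simpa using tendsto_one_div_add_atTop_nhds_zero_nat.const_mul C)

lemma arctan_sqrt_two_add_one_add_arctan_sqrt_two_sub_one :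
    arctan (√2 + 1) + arctan (√2 - 1) = π / 2 := by
  have h2 : √2 ^ 2 = 2 := sq_sqrt zero_le_two
  have hinv : (√2 + 1)⁻¹ = √2 - 1 := inv_eq_of_mul_eq_one_right (by linear_combination h2)
  rw [← hinv, arctan_inv_of_pos (by positivity)]
  ring

lemma integral_eight_mul_sq_div_one_add_pow_four :
    ∫ x in (0 : ℝ)..1, 8 * x ^ 2 / (1 + x ^ 4) = √2 * (π - 2 * log (√2 + 1)) := by
  have hcont : Continuous fun x : ℝ => 8 * x ^ 2 / (1 + x ^ 4) := by
    fun_prop (disch := intro x; positivity)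
  rw [intervalIntegral.integral_eq_sub_of_hasDerivAt
    (fun x _ => hasDerivAt_log_sub_log_add_arctan_add_arctan x) (hcont.intervalIntegrable 0 1)]
  have h2 : √2 ^ 2 = 2 := sq_sqrt zero_le_two
  have hpos : 0 < 1 - √2 + 1 := by nlinarith [sqrt_nonneg 2]
  have hlog : log (1 - √2 + 1) - log (1 + √2 + 1) = -(2 * log (√2 + 1)) := by
    rw [show 1 + √2 + 1 = (1 - √2 + 1) * (√2 + 1) ^ 2 by linear_combination √2 * h2,
      log_mul hpos.ne' (by positivity), log_pow]
    push_cast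
    ring
  simp only [one_pow, mul_one, zero_pow two_ne_zero, mul_zero, zero_sub, zero_add, sub_zero,
    arctan_neg, log_one, add_neg_cancel, sub_self]
  rw [hlog, arctan_sqrt_two_add_one_add_arctan_sqrt_two_sub_one]
  ring

lemma sum_inv_three_eighths_sub_inv_seven_eighths_eq (n : ℕ) :
    ∑ m ∈ Finset.range n, ((3 / 8 + (m : ℝ))⁻¹ - (7 / 8 + (m : ℝ))⁻¹) =
      (∫ x in (0 : ℝ)..1, 8 * x ^ 2 / (1 + x ^ 4)) -
        ∫ x in (0 : ℝ)..1, x ^ (8 * n + 2) * (8 / (1 + x ^ 4)) := by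
  have hint {f : ℝ → ℝ} (hf : Continuous f) : IntervalIntegrable f MeasureTheory.volume 0 1 :=
    hf.intervalIntegrable 0 1
  simp only [← integral_eight_mul_pow_sub_pow]
  rw [← intervalIntegral.integral_finsetSum fun m _ => hint (by fun_prop),
    ← intervalIntegral.integral_sub (hint (by fun_prop (disch := intro x; positivity)))
      (hint (by fun_prop (disch := intro x; positivity)))]
  refine intervalIntegral.integral_congr fun x _ => ?_
  have hx : 1 + x ^ 4 ≠ 0 := by positivity
  simp only [← Finset.mul_sum]
  field_simp
  linear_combination sum_range_sub_mul_one_add_pow_four x n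

lemma tendsto_sum_inv_three_eighths_sub_inv_seven_eighths :
    Tendsto (fun n : ℕ => ∑ m ∈ Finset.range n, ((3 / 8 + (m : ℝ))⁻¹ - (7 / 8 + (m : ℝ))⁻¹))
      atTop (𝓝 (∫ x in (0 : ℝ)..1, 8 * x ^ 2 / (1 + x ^ 4))) := by
  have hg : Continuous fun x : ℝ => 8 / (1 + x ^ 4) := by
    fun_prop (disch := intro x; positivity)
  have hexp : Tendsto (fun n : ℕ => 8 * n + 2) atTop atTop :=
    tendsto_atTop_mono (fun n => show n ≤ 8 * n + 2 by omega) tendsto_id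
  have htail := (tendsto_integral_pow_mul_of_continuousOn hg.continuousOn).comp hexp
  have h := htail.const_sub (∫ x in (0 : ℝ)..1, 8 * x ^ 2 / (1 + x ^ 4))
  rw [sub_zero] at h
  exact h.congr fun n => (sum_inv_three_eighths_sub_inv_seven_eighths_eq n).symm

/-- `ψ(7/8) - ψ(3/8) = √2 (π - 2 log(√2 + 1))`. -/
theorem digamma_seven_eighths_sub_three_eighths :
    digamma (7 / 8) - digamma (3 / 8) =
      Real.sqrt 2 * (Real.pi - 2 * Real.log (Real.sqrt 2 + 1)) := by
  rw [← integral_eight_mul_sq_div_one_add_pow_four]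
  exact tendsto_nhds_unique (tendsto_sum_inv_add_sub_inv_add (by norm_num) (by norm_num))
    tendsto_sum_inv_three_eighths_sub_inv_seven_eighths
end

section
/- For all real v, arctan(v/2) = arctan(v) - arctan(v/(v²+2)) and arctan(v) = 2 arctan(v/2) - arctan(v³/(3v²+4)). -/
/-! Both identities follow from two instances of the tangent addition formula sharing the term
`arctan (v / (v ^ 2 + 2))`: it joins `arctan (v / 2)` to `arctan v`, and `arctan (v ^ 3 / (3 * v ^ 2 + 4))`
to `arctan (v / 2)`. In both cases the product of the two arguments is below `1`, so no multiple of `π`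
appears. -/

open Real

theorem arctan_add_eq_of_mul_lt_one {x y z : ℝ} (hxy : x * y < 1) (h : x + y = z * (1 - x * y)) :
    arctan x + arctan y = arctan z := by
  rw [arctan_add hxy, h, mul_div_cancel_right₀ _ (sub_pos.mpr hxy).ne']

theorem arctan_half_add_arctan_div_sq_add_two (v : ℝ) :
    arctan (v / 2) + arctan (v / (v ^ 2 + 2)) = arctan v := by
  apply arctan_add_eq_of_mul_lt_one
  · rw [div_mul_div_comm, div_lt_one (by positivity)]
    nlinarith
  · field_simp
    ring

theorem arctan_cube_add_arctan_div_sq_add_two (v : ℝ) :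
    arctan (v ^ 3 / (3 * v ^ 2 + 4)) + arctan (v / (v ^ 2 + 2)) = arctan (v / 2) := by
  apply arctan_add_eq_of_mul_lt_one
  · rw [div_mul_div_comm, div_lt_one (by positivity)]
    nlinarith [sq_nonneg v]
  · field_simp
    ring

/-- Arctangent identities: for every real `v`,
`arctan(v/2) = arctan v - arctan(v/(v²+2))` and
`arctan v = 2 arctan(v/2) - arctan(v³/(3v²+4))`. -/
theorem arctan_identities (v : ℝ) :
    Real.arctan (v / 2) = Real.arctan v - Real.arctan (v / (v ^ 2 + 2)) ∧
    Real.arctan v = 2 * Real.arctan (v / 2) - Real.arctan (v ^ 3 / (3 * v ^ 2 + 4)) := by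
  have h₁ := arctan_half_add_arctan_div_sq_add_two v
  have h₂ := arctan_cube_add_arctan_div_sq_add_two v
  constructor <;> linarith
end

section
/- The alternating sum ∑_{j=0}^∞ (-1)^j log(j+1)/(j+1) converges and equals log(2)·(log(2) - 2γ)/2, where γ is the Euler–Mascheroni constant. -/
open Filter Finset Real Topology

/-!
Pairing consecutive terms, the `2n`-th partial sum equals
`∑_{k=n+1}^{2n} log k / k - log 2 · H_n`, because `2 log (2k) / (2k) = log 2 / k + log k / k`.
Since `log x / x` is eventually decreasing, the first sum is `∫_n^{2n} log x / x + o(1)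
= log 2 · log n + (log 2)² / 2 + o(1)`, and `H_n - log n → γ` finishes the even partial sums;
the odd ones differ from them by a term tending to `0`.
-/

theorem tendsto_of_tendsto_even_of_tendsto_odd {α : Type*} {u : ℕ → α} {l : Filter α}
    (he : Tendsto (fun n ↦ u (2 * n)) atTop l) (ho : Tendsto (fun n ↦ u (2 * n + 1)) atTop l) :
    Tendsto u atTop l := by
  intro s hs
  obtain ⟨Ne, hNe⟩ := eventually_atTop.1 (he hs)
  obtain ⟨No, hNo⟩ := eventually_atTop.1 (ho hs)
  refine eventually_atTop.2 ⟨2 * max Ne No, fun n hn ↦ ?_⟩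
  obtain ⟨k, rfl | rfl⟩ := Nat.even_or_odd' n
  exacts [hNe k (by omega), hNo k (by omega)]

theorem Finset.sum_range_two_mul_neg_one_pow_mul {R : Type*} [CommRing R] (f : ℕ → R) (n : ℕ) :
    ∑ j ∈ range (2 * n), (-1) ^ j * f j
      = ∑ j ∈ range (2 * n), f j - 2 * ∑ k ∈ range n, f (2 * k + 1) := by
  induction n with
  | zero => simp
  | succ n ih =>
    rw [show 2 * (n + 1) = 2 * n + 1 + 1 by ring]
    simp only [sum_range_succ, ih, pow_succ, pow_mul]
    ring

theorem AntitoneOn.integral_sub_sum_le {f : ℝ → ℝ} {x₀ : ℝ} {n : ℕ}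
    (hf : AntitoneOn f (Set.Icc x₀ (x₀ + n))) :
    (∫ x in x₀..x₀ + n, f x) - ∑ i ∈ range n, f (x₀ + ↑(i + 1)) ≤ f x₀ - f (x₀ + n) := by
  have htel : ∑ i ∈ range n, f (x₀ + i) - ∑ i ∈ range n, f (x₀ + ↑(i + 1))
      = f x₀ - f (x₀ + n) := by
    simpa [← sum_sub_distrib] using sum_range_sub' (fun i : ℕ ↦ f (x₀ + i)) n
  linarith [hf.integral_le_sum]

namespace Real

theorem integral_log_div_self {a b : ℝ} (ha : 0 < a) (hb : 0 < b) :
    ∫ x in a..b, log x / x = (log b ^ 2 - log a ^ 2) / 2 := by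
  have hpos : ∀ x ∈ Set.uIcc a b, 0 < x := fun x hx ↦ (lt_min ha hb).trans_le hx.1
  refine (intervalIntegral.integral_eq_sub_of_hasDerivAt (f := fun x ↦ log x ^ 2 / 2)
    (fun x hx ↦ ?_) ?_).trans (by ring)
  · refine (((hasDerivAt_log (hpos x hx).ne').fun_pow 2).div_const 2).congr_deriv ?_
    field_simp
    ring
  · exact ContinuousOn.intervalIntegrable <| (continuousOn_log.mono fun x hx ↦ (hpos x hx).ne').div
      continuousOn_id fun x hx ↦ (hpos x hx).ne'

theorem two_mul_log_div_two_mul {x : ℝ} (hx : x ≠ 0) :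
    2 * (log (2 * x) / (2 * x)) = log 2 / x + log x / x := by
  rw [log_mul two_ne_zero hx]
  field_simp

theorem tendsto_log_div_self_atTop : Tendsto (fun x ↦ log x / x) atTop (𝓝 0) :=
  isLittleO_log_id_atTop.tendsto_div_nhds_zero

end Real

theorem sum_range_two_mul_neg_one_pow_mul_log_div (n : ℕ) :
    ∑ j ∈ range (2 * n), (-1 : ℝ) ^ j * (log (j + 1) / (j + 1))
      = ∑ i ∈ range n, log (n + ↑(i + 1)) / (n + ↑(i + 1)) - log 2 * harmonic n := by
  have hodd (k : ℕ) : 2 * (log (↑(2 * k + 1) + 1) / (↑(2 * k + 1) + 1))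
      = log 2 / (k + 1) + log (k + 1) / (k + 1) := by
    rw [← two_mul_log_div_two_mul (by positivity : (k : ℝ) + 1 ≠ 0)]
    push_cast
    ring_nf
  rw [sum_range_two_mul_neg_one_pow_mul, two_mul, sum_range_add, mul_sum,
    sum_congr rfl fun k _ ↦ hodd k, sum_add_distrib, harmonic]
  push_cast
  simp only [mul_sum, div_eq_mul_inv, add_assoc]
  ring

theorem tendsto_sum_log_div_sub_log_two_mul_log :
    Tendsto (fun n : ℕ ↦ ∑ i ∈ range n, log (n + ↑(i + 1)) / (n + ↑(i + 1)) - log 2 * log n)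
      atTop (𝓝 (log 2 ^ 2 / 2)) := by
  have hintegral {n : ℕ} (hn : 1 ≤ n) :
      ∫ x in (n : ℝ)..n + n, log x / x = log 2 * log n + log 2 ^ 2 / 2 := by
    have hn' : (0 : ℝ) < n := by exact_mod_cast hn
    rw [integral_log_div_self hn' (by positivity), ← two_mul, log_mul two_ne_zero hn'.ne']
    ring
  have hanti {n : ℕ} (hn : 3 ≤ n) : AntitoneOn (fun x ↦ log x / x) (Set.Icc n (n + n)) := by
    refine log_div_self_antitoneOn.mono fun x hx ↦ ?_
    have : (3 : ℝ) ≤ n := by exact_mod_cast hn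
    exact Set.mem_Ici.2 (by linarith [exp_one_lt_d9, hx.1])
  have herror : Tendsto (fun n : ℕ ↦ (∫ x in (n : ℝ)..n + n, log x / x)
      - ∑ i ∈ range n, log (n + ↑(i + 1)) / (n + ↑(i + 1))) atTop (𝓝 0) := by
    refine tendsto_of_tendsto_of_tendsto_of_le_of_le' tendsto_const_nhds
      (tendsto_log_div_self_atTop.comp tendsto_natCast_atTop_atTop) ?_ ?_
    · filter_upwards [eventually_ge_atTop 3] with n hn
      exact sub_nonneg.2 (hanti hn).sum_le_integral
    · filter_upwards [eventually_ge_atTop 3] with n hn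
      have : 0 ≤ log (n + n : ℝ) / (n + n) := div_nonneg (log_nonneg (by norm_cast; omega))
        (by positivity)
      show _ ≤ log (n : ℝ) / n
      linarith [(hanti hn).integral_sub_sum_le]
  rw [← sub_zero (log 2 ^ 2 / 2)]
  refine (herror.const_sub _).congr' ?_
  filter_upwards [eventually_ge_atTop 1] with n hn
  rw [hintegral hn]
  ring

theorem tendsto_sum_range_two_mul_neg_one_pow_mul_log_div :
    Tendsto (fun n ↦ ∑ j ∈ range (2 * n), (-1 : ℝ) ^ j * (log (j + 1) / (j + 1))) atTop
      (𝓝 (log 2 * (log 2 - 2 * eulerMascheroniConstant) / 2)) := by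
  have h := tendsto_sum_log_div_sub_log_two_mul_log.sub
    (tendsto_harmonic_sub_log.const_mul (log 2))
  simp_rw [sum_range_two_mul_neg_one_pow_mul_log_div]
  convert h using 2 <;> ring

/-- `∑_{j=0}^∞ (-1)^j log(j+1)/(j+1)` converges (as a limit of partial sums) and
equals `log 2 (log 2 - 2γ)/2`, where `γ` is the Euler–Mascheroni constant. -/
theorem alternating_log_sum :
    Tendsto (fun N => ∑ j ∈ Finset.range N,
        (-1 : ℝ) ^ j * Real.log ((j : ℝ) + 1) / ((j : ℝ) + 1)) atTop
      (nhds (Real.log 2 * (Real.log 2 - 2 * Real.eulerMascheroniConstant) / 2)) := by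
  have hterm : Tendsto (fun j : ℕ ↦ (-1 : ℝ) ^ j * (log (j + 1) / (j + 1))) atTop (𝓝 0) := by
    refine tendsto_zero_iff_norm_tendsto_zero.2 ?_
    simp only [norm_mul, norm_pow, norm_neg, norm_one, one_pow, one_mul]
    simpa only [norm_zero, Function.comp_def] using (tendsto_log_div_self_atTop.comp
      (tendsto_atTop_add_const_right _ 1 tendsto_natCast_atTop_atTop)).norm
  have heven := tendsto_sum_range_two_mul_neg_one_pow_mul_log_div
  refine (tendsto_of_tendsto_even_of_tendsto_odd heven ?_).congr fun N ↦
    sum_congr rfl fun j _ ↦ (mul_div_assoc _ _ _).symm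
  simpa only [sum_range_succ, Function.comp_def, add_zero] using
    heven.add (hterm.comp (strictMono_mul_left_of_pos two_pos).tendsto_atTop)
end
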